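/- Let S be a vertex subset of a finite graph G achieving maximum deficiency df(S), and among such sets minimizing Df(S). Then every odd S-component is factor-critical. -/

import Mathlib

open SimpleGraph Set

variable {V : Type*} [Fintype V] [DecidableEq V]

/-- The vertex set (in `V`) of a connected component of the graph induced on `B`. -/
def compSupp (G : SimpleGraph V) (B : Set V)
    (c : (G.induce B).ConnectedComponent) : Set V :=
  Subtype.val '' c.supp

/-- `A` is (the vertex set of) a connected component of `G` restricted to `B`. -/
def IsCompOf (G : SimpleGraph V) (B : Set V) (A : Set V) : Prop :=
  ∃ c : (G.induce B).ConnectedComponent, A = compSupp G B c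

/-- The number of odd connected components of `G` restricted to `B`. -/
noncomputable def oddComps (G : SimpleGraph V) (B : Set V) : ℕ :=
  Set.ncard {c : (G.induce B).ConnectedComponent | Odd (compSupp G B c).ncard}

/-- The deficiency `df(S) = od(S) - |S|`. -/
noncomputable def df (G : SimpleGraph V) (S : Set V) : ℤ :=
  (oddComps G Sᶜ : ℤ) - S.ncard

/-- The induced subgraph on `A` has a perfect matching. -/
def HasPM (G : SimpleGraph V) (A : Set V) : Prop :=
  ∃ M : Subgraph (G.induce A), M.IsPerfectMatching

/-- `Df(S)`: total number of vertices in components of `G - S` with no perfect matching. -/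
noncomputable def Df (G : SimpleGraph V) (S : Set V) : ℕ :=
  Set.ncard (⋃ c ∈ {c : (G.induce Sᶜ).ConnectedComponent |
    ¬ HasPM G (compSupp G Sᶜ c)}, compSupp G Sᶜ c)

/-- The set of `M`-exposed vertices. -/
def exposed (G : SimpleGraph V) (M : Subgraph G) : Set V :=
  {v | v ∉ M.support}

/-- `A` induces a factor-critical graph. -/
def FactorCritical (G : SimpleGraph V) (A : Set V) : Prop :=
  ∀ v ∈ A, HasPM G (A \ {v})

/-- The neighborhood of `T ⊆ S` in the bipartite minor `⟨G,S⟩`: the odd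
`S`-components adjacent to some vertex of `T`. -/
def minorNbhd (G : SimpleGraph V) (S T : Set V) :
    Set (G.induce Sᶜ).ConnectedComponent :=
  {c | Odd (compSupp G Sᶜ c).ncard ∧ ∃ u ∈ T, ∃ w ∈ compSupp G Sᶜ c, G.Adj u w}

/-- `S` is a Gallai-Edmonds set of `G`. -/
def GallaiEdmonds (G : SimpleGraph V) (S : Set V) : Prop :=
  (∀ c : (G.induce Sᶜ).ConnectedComponent,
      Even (compSupp G Sᶜ c).ncard → HasPM G (compSupp G Sᶜ c)) ∧
  (∀ c : (G.induce Sᶜ).ConnectedComponent,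
      Odd (compSupp G Sᶜ c).ncard → FactorCritical G (compSupp G Sᶜ c)) ∧
  (∀ T ⊆ S, T.Nonempty → T.ncard + 1 ≤ (minorNbhd G S T).ncard)

/-- `w` and `w'` lie in the same `S`-component. -/
def SameComp (G : SimpleGraph V) (S : Set V) (w w' : V) : Prop :=
  ∃ c : (G.induce Sᶜ).ConnectedComponent,
    w ∈ compSupp G Sᶜ c ∧ w' ∈ compSupp G Sᶜ c

/-- `M` is a maximum matching of `G`. -/
def IsMaximumMatching (G : SimpleGraph V) (M : Subgraph G) : Prop :=
  M.IsMatching ∧ ∀ M' : Subgraph G, M'.IsMatching →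
    M'.edgeSet.ncard ≤ M.edgeSet.ncard

/-!
Let `C` be an odd `S`-component and `∅ ≠ W ⊆ C`. Moving `W` into `S` replaces `C` by the
components of `C \ W`, so `df (S ∪ W) = df S - 1 + od (C \ W) - |W|`. Maximality of `df S` gives
`od (C \ W) ≤ |W| + 1`. Equality is impossible: it would keep `df` and strictly shrink `Df`,
since `C`, being odd, is one of the components without a perfect matching and loses the vertices
of `W`. As `od (C \ W) ≡ |C \ W| ≡ |W| + 1 (mod 2)`, we get `od (C \ W) ≤ |W| - 1`. For `v ∈ C`
and `W = T ∪ {v}` this is Tutte's condition for `C - v`.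
-/

lemma SimpleGraph.Iso.ncard_oddComponents {α β : Type*} {H : SimpleGraph α} {H' : SimpleGraph β}
    (e : H ≃g H') : H.oddComponents.ncard = H'.oddComponents.ncard := by
  rw [← Set.ncard_image_of_injective _ e.connectedComponentEquiv.injective,
    Equiv.image_eq_preimage_symm]
  congr 1
  ext c
  rw [Set.mem_preimage, ← Iso.connectedComponentEquiv_symm]
  simp only [oddComponents, Set.mem_ofPred_eq, ← Nat.card_coe_set_eq,
    Nat.card_congr (ConnectedComponent.isoEquivSupp e.symm c)]

section

omit [Fintype V] [DecidableEq V]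

variable {G : SimpleGraph V} {D A A' C W : Set V}

lemma mem_compSupp {c : (G.induce D).ConnectedComponent} {x : V} :
    x ∈ compSupp G D c ↔ ∃ hx : x ∈ D, (G.induce D).connectedComponentMk ⟨x, hx⟩ = c :=
  ⟨fun ⟨⟨_, hy⟩, hmem, hxy⟩ => hxy ▸ ⟨hy, hmem⟩, fun ⟨hx, hmk⟩ => ⟨⟨x, hx⟩, hmk, rfl⟩⟩

lemma mem_of_reachable_of_closed (hA : ∀ x ∈ A, ∀ y ∈ D, G.Adj x y → y ∈ A) {u v : D}
    (huv : (G.induce D).Reachable u v) (hu : ↑u ∈ A) : ↑v ∈ A := by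
  obtain ⟨p⟩ := huv
  induction p with
  | nil => exact hu
  | cons hadj _ ih => exact ih (hA _ hu _ (Subtype.prop _) hadj)

lemma subset_of_connected_of_closed (hA : (G.induce A).Connected) (hAD : A ⊆ D)
    (hC : ∀ x ∈ C, ∀ y ∈ D, G.Adj x y → y ∈ C) (hAC : (A ∩ C).Nonempty) : A ⊆ C := by
  obtain ⟨a, haA, haC⟩ := hAC
  intro x hx
  have hreach := (hA.preconnected ⟨a, haA⟩ ⟨x, hx⟩).map (induceHomOfLE G hAD).toHom
  exact mem_of_reachable_of_closed hC hreach haC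

lemma isCompOf_iff : IsCompOf G D A ↔
    A ⊆ D ∧ (G.induce A).Connected ∧ ∀ x ∈ A, ∀ y ∈ D, G.Adj x y → y ∈ A := by
  constructor
  · rintro ⟨c, rfl⟩
    refine ⟨fun x hx => (mem_compSupp.mp hx).1, ?_, fun x hx y hy hxy => ?_⟩
    · refine (ConnectedComponent.connected_toSimpleGraph c).map
        ⟨fun x => ⟨x.1.1, x.1, x.2, rfl⟩, fun h => h⟩ ?_
      rintro ⟨_, y, hy, rfl⟩
      exact ⟨⟨y, hy⟩, rfl⟩
    · obtain ⟨hxD, rfl⟩ := mem_compSupp.mp hx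
      exact mem_compSupp.mpr ⟨hy, (ConnectedComponent.connectedComponentMk_eq_of_adj
        (show (G.induce D).Adj ⟨x, hxD⟩ ⟨y, hy⟩ from hxy)).symm⟩
  · rintro ⟨hAD, hA, hclosed⟩
    obtain ⟨⟨a, ha⟩⟩ := hA.nonempty
    refine ⟨(G.induce D).connectedComponentMk ⟨a, hAD ha⟩, Set.ext fun x => ⟨fun hx => ?_, ?_⟩⟩
    · exact mem_compSupp.mpr ⟨hAD hx, ConnectedComponent.sound
        ((hA.preconnected ⟨a, ha⟩ ⟨x, hx⟩).map (induceHomOfLE G hAD).toHom).symm⟩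
    · intro hx
      obtain ⟨hxD, hmk⟩ := mem_compSupp.mp hx
      exact mem_of_reachable_of_closed hclosed (ConnectedComponent.exact hmk.symm) ha

lemma IsCompOf.nonempty (hA : IsCompOf G D A) : A.Nonempty := by
  obtain ⟨⟨a, ha⟩⟩ := (isCompOf_iff.mp hA).2.1.nonempty
  exact ⟨a, ha⟩

lemma IsCompOf.disjoint (hA : IsCompOf G D A) (hA' : IsCompOf G D A') (hne : A ≠ A') :
    Disjoint A A' := by
  obtain ⟨c, rfl⟩ := hA
  obtain ⟨c', rfl⟩ := hA'
  refine Set.disjoint_left.mpr fun x hx hx' => hne ?_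
  obtain ⟨_, rfl⟩ := mem_compSupp.mp hx
  obtain ⟨_, rfl⟩ := mem_compSupp.mp hx'
  rfl

lemma isCompOf_sdiff_iff (hC : IsCompOf G D C) (hW : W ⊆ C) :
    IsCompOf G (D \ W) A ↔ (IsCompOf G D A ∧ A ≠ C) ∨ IsCompOf G (C \ W) A := by
  obtain ⟨hCD, -, hCcl⟩ := isCompOf_iff.mp hC
  simp only [isCompOf_iff]
  constructor
  · rintro ⟨hA, hAconn, hAcl⟩
    by_cases hAC : (A ∩ C).Nonempty
    · have hAC := subset_of_connected_of_closed hAconn (fun x hx => (hA hx).1) hCcl hAC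
      exact Or.inr ⟨fun x hx => ⟨hAC hx, (hA hx).2⟩, hAconn,
        fun x hx y hy => hAcl x hx y ⟨hCD hy.1, hy.2⟩⟩
    · refine Or.inl ⟨⟨fun x hx => (hA hx).1, hAconn, fun x hx y hy hxy => ?_⟩, ?_⟩
      · by_cases hyW : y ∈ W
        · exact absurd ⟨x, hx, hCcl y (hW hyW) x (hA hx).1 hxy.symm⟩ hAC
        · exact hAcl x hx y ⟨hy, hyW⟩ hxy
      · rintro rfl
        obtain ⟨⟨a, ha⟩⟩ := hAconn.nonempty
        exact hAC ⟨a, ha, ha⟩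
  · rintro (⟨⟨hA, hAconn, hAcl⟩, hne⟩ | ⟨hA, hAconn, hAcl⟩)
    · have hdisj := IsCompOf.disjoint (isCompOf_iff.mpr ⟨hA, hAconn, hAcl⟩) hC hne
      exact ⟨fun x hx => ⟨hA hx, fun hxW => hdisj.notMem_of_mem_left hx (hW hxW)⟩, hAconn,
        fun x hx y hy => hAcl x hx y hy.1⟩
    · refine ⟨fun x hx => ⟨hCD (hA hx).1, (hA hx).2⟩, hAconn, fun x hx y hy hxy => ?_⟩
      exact hAcl x hx y ⟨hCcl x (hA hx).1 y hy.1 hxy, hy.2⟩ hxy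

lemma ncard_compSupp (c : (G.induce D).ConnectedComponent) :
    (compSupp G D c).ncard = c.supp.ncard :=
  Set.ncard_image_of_injective _ Subtype.val_injective

lemma oddComps_eq_ncard_setOf_isCompOf :
    oddComps G D = {A | IsCompOf G D A ∧ Odd A.ncard}.ncard := by
  have hinj : Function.Injective (compSupp G D) := fun c c' h =>
    ConnectedComponent.supp_injective (Set.image_injective.mpr Subtype.val_injective h)
  have himage : {A | IsCompOf G D A ∧ Odd A.ncard} =
      compSupp G D '' {c | Odd (compSupp G D c).ncard} := by
    ext A
    constructor
    · rintro ⟨⟨c, rfl⟩, hodd⟩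
      exact ⟨c, hodd, rfl⟩
    · rintro ⟨c, hodd, rfl⟩
      exact ⟨⟨c, rfl⟩, hodd⟩
  rw [oddComps, himage, Set.ncard_image_of_injective _ hinj]

lemma oddComps_eq_ncard_oddComponents : oddComps G D = (G.induce D).oddComponents.ncard := by
  simp only [oddComps, oddComponents, ncard_compSupp]

def nonPMPart (G : SimpleGraph V) (D : Set V) : Set V :=
  ⋃₀ {A | IsCompOf G D A ∧ ¬ HasPM G A}

lemma Df_eq_ncard_nonPMPart (S : Set V) : Df G S = (nonPMPart G Sᶜ).ncard := by
  rw [Df, nonPMPart]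
  congr 1
  ext x
  simp only [Set.mem_iUnion₂, Set.mem_sUnion, Set.mem_ofPred_eq]
  constructor
  · rintro ⟨c, hc, hx⟩
    exact ⟨_, ⟨⟨c, rfl⟩, hc⟩, hx⟩
  · rintro ⟨_, ⟨⟨c, rfl⟩, hc⟩, hx⟩
    exact ⟨c, hc, hx⟩

lemma nonPMPart_sdiff_subset (hC : IsCompOf G D C) (hW : W ⊆ C) (hCnpm : ¬ HasPM G C) :
    nonPMPart G (D \ W) ⊆ nonPMPart G D \ W := by
  rintro x ⟨A, ⟨hA, hAnpm⟩, hx⟩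
  rcases (isCompOf_sdiff_iff hC hW).mp hA with ⟨hA', hne⟩ | hA'
  · exact ⟨⟨A, ⟨hA', hAnpm⟩, hx⟩, fun hxW => (hA'.disjoint hC hne).notMem_of_mem_left hx (hW hxW)⟩
  · have hxCW := (isCompOf_iff.mp hA').1 hx
    exact ⟨⟨C, ⟨hC, hCnpm⟩, hxCW.1⟩, hxCW.2⟩

def deleteVertsIsoInduce (A : Set V) (u : Set A) :
    ((⊤ : (G.induce A).Subgraph).deleteVerts u).coe ≃g G.induce (A \ Subtype.val '' u) where
  toFun x := ⟨x.1.1, x.1.2, fun ⟨y, hy, hyx⟩ => x.2.2 (Subtype.ext hyx ▸ hy)⟩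
  invFun y := ⟨⟨y.1, y.2.1⟩, trivial, fun h => y.2.2 ⟨_, h, rfl⟩⟩
  left_inv x := rfl
  right_inv y := rfl
  map_rel_iff' := by
    intro x y
    simp [x.2.2, y.2.2]

variable [Finite V]

lemma odd_oddComps_iff : Odd (oddComps G D) ↔ Odd D.ncard := by
  rw [oddComps_eq_ncard_oddComponents, odd_ncard_oddComponents, Nat.card_coe_set_eq]

lemma oddComps_sdiff_add_one (hC : IsCompOf G D C) (hCodd : Odd C.ncard) (hW : W ⊆ C) :
    oddComps G (D \ W) + 1 = oddComps G D + oddComps G (C \ W) := by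
  simp only [oddComps_eq_ncard_setOf_isCompOf]
  have hsplit : {A | IsCompOf G (D \ W) A ∧ Odd A.ncard} =
      ({A | IsCompOf G D A ∧ Odd A.ncard} \ {C}) ∪ {A | IsCompOf G (C \ W) A ∧ Odd A.ncard} := by
    ext A
    simp only [Set.mem_ofPred_eq, Set.mem_union, Set.mem_sdiff, Set.mem_singleton_iff,
      isCompOf_sdiff_iff hC hW]
    tauto
  have hdisj : Disjoint ({A | IsCompOf G D A ∧ Odd A.ncard} \ {C})
      {A | IsCompOf G (C \ W) A ∧ Odd A.ncard} := by
    refine Set.disjoint_left.mpr fun A ⟨⟨hA, _⟩, hne⟩ ⟨hA', _⟩ => ?_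
    obtain ⟨a, ha⟩ := hA.nonempty
    exact (hA.disjoint hC hne).notMem_of_mem_left ha ((isCompOf_iff.mp hA').1 ha).1
  have hCmem : C ∈ {A | IsCompOf G D A ∧ Odd A.ncard} := ⟨hC, hCodd⟩
  rw [hsplit, Set.ncard_union_eq hdisj, add_right_comm, Set.ncard_sdiff_singleton_add_one hCmem]

lemma not_hasPM_of_odd (hA : Odd A.ncard) : ¬ HasPM G A := by
  rintro ⟨M, hM⟩
  have := Fintype.ofFinite A
  rw [← Nat.card_coe_set_eq, Nat.card_eq_fintype_card] at hA
  exact Nat.not_even_iff_odd.mpr hA hM.even_card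

lemma ncard_nonPMPart_sdiff_lt (hC : IsCompOf G D C) (hW : W ⊆ C) (hWne : W.Nonempty)
    (hCnpm : ¬ HasPM G C) : (nonPMPart G (D \ W)).ncard < (nonPMPart G D).ncard := by
  obtain ⟨w, hw⟩ := hWne
  refine Set.ncard_lt_ncard ((nonPMPart_sdiff_subset hC hW hCnpm).trans_ssubset ?_)
  exact Set.sdiff_ssubset_left_iff.mpr ⟨w, ⟨C, ⟨hC, hCnpm⟩, hW hw⟩, hw⟩

lemma hasPM_of_forall_oddComps_le (h : ∀ T ⊆ A, oddComps G (A \ T) ≤ T.ncard) : HasPM G A := by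
  refine tutte.mpr fun u hu => ?_
  have hle := h (Subtype.val '' u) (by simp)
  rw [oddComps_eq_ncard_oddComponents, ← (deleteVertsIsoInduce A u).ncard_oddComponents,
    Set.ncard_image_of_injective _ Subtype.val_injective] at hle
  exact hu.not_ge hle

lemma df_union_add (S : Set V) (hC : IsCompOf G Sᶜ C) (hCodd : Odd C.ncard) (hW : W ⊆ C) :
    df G (S ∪ W) + 1 + W.ncard = df G S + oddComps G (C \ W) := by
  have hSW : Disjoint S W :=
    Set.disjoint_left.mpr fun x hxS hxW => (isCompOf_iff.mp hC).1 (hW hxW) hxS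
  have hcount := oddComps_sdiff_add_one hC hCodd hW
  rw [df, df, Set.compl_union, ← Set.sdiff_eq, Set.ncard_union_eq hSW]
  push_cast
  omega

lemma oddComps_sdiff_add_one_le {S : Set V} (hmax : ∀ T : Set V, df G T ≤ df G S)
    (hmin : ∀ T : Set V, df G T = df G S → Df G S ≤ Df G T)
    (hC : IsCompOf G Sᶜ C) (hCodd : Odd C.ncard) (hW : W ⊆ C) (hWne : W.Nonempty) :
    oddComps G (C \ W) + 1 ≤ W.ncard := by
  have hdf := df_union_add S hC hCodd hW
  have hle := hmax (S ∪ W)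
  have hne : oddComps G (C \ W) ≠ W.ncard + 1 := by
    intro heq
    have hDf := hmin (S ∪ W) (by omega)
    rw [Df_eq_ncard_nonPMPart, Df_eq_ncard_nonPMPart, Set.compl_union, ← Set.sdiff_eq] at hDf
    exact (ncard_nonPMPart_sdiff_lt hC hW hWne (not_hasPM_of_odd hCodd)).not_ge hDf
  have hpar : Odd (oddComps G (C \ W)) ↔ Odd (C \ W).ncard := odd_oddComps_iff
  simp only [Nat.odd_iff] at hpar hCodd
  have hcard := Set.ncard_sdiff_add_ncard_of_subset hW
  omega

end

/-- If `S` maximizes `df` and, among such sets, minimizes `Df`, then every odd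
`S`-component is factor-critical. -/
theorem stmt_4 (G : SimpleGraph V) (S : Set V)
    (hmax : ∀ T : Set V, df G T ≤ df G S)
    (hmin : ∀ T : Set V, df G T = df G S → Df G S ≤ Df G T) :
    ∀ c : (G.induce Sᶜ).ConnectedComponent,
      Odd (compSupp G Sᶜ c).ncard → FactorCritical G (compSupp G Sᶜ c) := by
  intro c hcodd v hv
  refine hasPM_of_forall_oddComps_le fun T hT => ?_
  have hvT : v ∉ T := fun h => (hT h).2 rfl
  have hsub : insert v T ⊆ compSupp G Sᶜ c := Set.insert_subset hv (hT.trans sdiff_subset)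
  have hbound := oddComps_sdiff_add_one_le hmax hmin ⟨c, rfl⟩ hcodd hsub (Set.insert_nonempty v T)
  rw [Set.ncard_insert_of_notMem hvT] at hbound
  rw [Set.sdiff_sdiff, Set.singleton_union]
  omega
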